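/- arXiv:2403.12195 — 5 statements merged into one kernel-verified Lean document; each statement's English description precedes it below -/
import Mathlib

section
/- (Small gap theorem) For any m × n grid with m ≤ n, if γ(m,n) < |P(m,n)|, then the m × n grid does not admit a perfect game of PackIt!. -/
/-- The `k`-th triangular number `T_k = k(k+1)/2`. -/
def tri (k : ℕ) : ℕ := k * (k + 1) / 2

/-- `tau r` is the largest `k` such that `T_k ≤ r`. -/
def tau (r : ℕ) : ℕ := Nat.findGreatest (fun k => tri k ≤ r) r

/-- The gap `γ(m,n) = m·n − T_{τ(m·n)}`. -/
def gap (m n : ℕ) : ℕ := m * n - tri (tau (m * n))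

/-- `P(m,n)`: the set of primes `p` with `n < p ≤ K(m,n) = τ(m·n)`. -/
def primeSet (m n : ℕ) : Finset ℕ := (Finset.Ioc n (tau (m * n))).filter Nat.Prime

/-- The cells occupied by an axis-aligned rectangle with top-left corner
`pos` and dimensions `dim` (height, width). -/
def rectCells (pos dim : ℕ × ℕ) : Finset (ℕ × ℕ) :=
  Finset.Ico pos.1 (pos.1 + dim.1) ×ˢ Finset.Ico pos.2 (pos.2 + dim.2)

/-- A perfect game of PackIt! on the `m × n` grid: a finite sequence of
axis-aligned rectangles, placed at turns `1, …, K`, such that the rectangle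
placed at turn `t` has area `t` or `t+1`, the rectangles are pairwise
disjoint, and together they cover all `m·n` cells of the grid. -/
structure PerfectPackItGame (m n : ℕ) where
  K : ℕ
  pos : ℕ → ℕ × ℕ
  dim : ℕ → ℕ × ℕ
  area_valid : ∀ t ∈ Finset.Icc 1 K,
    (dim t).1 * (dim t).2 = t ∨ (dim t).1 * (dim t).2 = t + 1
  pairwise_disjoint : ∀ t₁ ∈ Finset.Icc 1 K, ∀ t₂ ∈ Finset.Icc 1 K, t₁ ≠ t₂ →
    Disjoint (rectCells (pos t₁) (dim t₁)) (rectCells (pos t₂) (dim t₂))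
  covers : (Finset.Icc 1 K).biUnion (fun t => rectCells (pos t) (dim t)) =
    Finset.range m ×ˢ Finset.range n

lemma two_mul_tri (k : ℕ) : 2 * tri k = k * (k + 1) := by
  have h : 2 ∣ k * (k + 1) := (Nat.even_mul_succ_self k).two_dvd
  unfold tri; omega

lemma tri_succ (k : ℕ) : tri (k + 1) = tri k + (k + 1) := by
  simp only [tri]
  rw [show (k + 1) * (k + 1 + 1) = k * (k + 1) + 2 * (k + 1) by ring,
    Nat.add_mul_div_left _ _ (by norm_num : (0:ℕ) < 2)]

lemma le_tri (k : ℕ) : k ≤ tri k := by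
  induction k with
  | zero => simp [tri]
  | succ n ih => rw [tri_succ]; omega

lemma tri_mono : Monotone tri :=
  monotone_nat_of_le_succ fun k => by rw [tri_succ]; omega

lemma sum_Icc_id (K : ℕ) : ∑ t ∈ Finset.Icc 1 K, t = tri K := by
  induction K with
  | zero => simp [tri]
  | succ k ih => rw [Finset.sum_Icc_succ_top (by omega), ih, tri_succ]

lemma tau_eq {K N : ℕ} (h1 : tri K ≤ N) (h2 : N < tri (K + 1)) : tau N = K := by
  apply Nat.findGreatest_eq_iff.mpr
  refine ⟨le_trans (le_tri K) h1, fun _ => h1, fun k hk hk' hP => ?_⟩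
  have := le_trans (tri_mono (show K + 1 ≤ k from hk)) hP
  omega


/-- Small gap theorem: if `γ(m,n) < |P(m,n)|`, then the `m × n` grid does not
admit a perfect game of PackIt!. -/
theorem packit_small_gap (m n : ℕ) (hm : 0 < m) (hmn : m ≤ n)
    (h : gap m n < (primeSet m n).card) :
    IsEmpty (PerfectPackItGame m n) := by
  constructor
  intro g
  obtain ⟨K, pos, dim, area_valid, pdisj, covers⟩ := g
  -- areas sum to m*n
  have hc : ∀ t, (rectCells (pos t) (dim t)).card = (dim t).1 * (dim t).2 := by
    intro t; simp [rectCells]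
  have hsum : ∑ t ∈ Finset.Icc 1 K, (dim t).1 * (dim t).2 = m * n := by
    have hb := (Finset.card_biUnion pdisj).symm
    rw [covers] at hb
    simpa [hc] using hb
  set e : ℕ → ℕ := fun t => (dim t).1 * (dim t).2 - t with he
  have he01 : ∀ t ∈ Finset.Icc 1 K, e t ≤ 1 ∧ (dim t).1 * (dim t).2 = t + e t := by
    intro t ht
    rcases area_valid t ht with hA | hA <;> simp [he, hA]
  have hsplit : ∑ t ∈ Finset.Icc 1 K, (dim t).1 * (dim t).2
      = tri K + ∑ t ∈ Finset.Icc 1 K, e t := by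
    rw [← sum_Icc_id K, ← Finset.sum_add_distrib]
    exact Finset.sum_congr rfl fun t ht => (he01 t ht).2
  have hEle : ∑ t ∈ Finset.Icc 1 K, e t ≤ K := by
    calc ∑ t ∈ Finset.Icc 1 K, e t ≤ ∑ _t ∈ Finset.Icc 1 K, 1 :=
          Finset.sum_le_sum fun t ht => (he01 t ht).1
      _ = K := by simp
  have htau : tau (m * n) = K := by
    apply tau_eq <;> rw [← hsum, hsplit]
    · omega
    · rw [tri_succ]; omega
  have hgap : gap m n = ∑ t ∈ Finset.Icc 1 K, e t := by
    have : m * n = tri K + ∑ t ∈ Finset.Icc 1 K, e t := by rw [← hsum, hsplit]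
    simp [gap, htau]; omega
  -- each prime in primeSet is an excess turn
  have hsubP : primeSet m n ⊆ Finset.Icc 1 K := by
    intro p hp
    simp only [primeSet, Finset.mem_filter, Finset.mem_Ioc, htau] at hp
    have := hp.2.two_le
    simp only [Finset.mem_Icc]; omega
  have hprime : ∀ p ∈ primeSet m n, 1 ≤ e p := by
    intro p hp
    have hmem := hsubP hp
    simp only [primeSet, Finset.mem_filter, Finset.mem_Ioc, htau] at hp
    obtain ⟨⟨hnp, hpK⟩, hpp⟩ := hp
    rcases area_valid p hmem with hA | hA
    · exfalso
      have hsub : rectCells (pos p) (dim p) ⊆ Finset.range m ×ˢ Finset.range n := by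
        rw [← covers]; exact Finset.subset_biUnion_of_mem (fun t => rectCells (pos t) (dim t)) hmem
      have hppos := hpp.pos
      have ha : 0 < (dim p).1 := by
        rcases Nat.eq_zero_or_pos (dim p).1 with h0 | h0
        · rw [h0, zero_mul] at hA; omega
        · exact h0
      have hb : 0 < (dim p).2 := by
        rcases Nat.eq_zero_or_pos (dim p).2 with h0 | h0
        · rw [h0, mul_zero] at hA; omega
        · exact h0
      have hcell : ((pos p).1 + (dim p).1 - 1, (pos p).2 + (dim p).2 - 1)
          ∈ rectCells (pos p) (dim p) := by
        simp only [rectCells, Finset.mem_product, Finset.mem_Ico]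
        omega
      have hgrid := hsub hcell
      simp only [Finset.mem_product, Finset.mem_range] at hgrid
      have ham : (dim p).1 ≤ m := by omega
      have hbn : (dim p).2 ≤ n := by omega
      have hdvd : (dim p).1 ∣ p := ⟨(dim p).2, hA.symm⟩
      rcases (Nat.Prime.eq_one_or_self_of_dvd hpp _ hdvd) with h1 | h1
      · rw [h1, one_mul] at hA; omega
      · omega
    · simp only [he]; omega
  have hfinal : (primeSet m n).card ≤ ∑ t ∈ Finset.Icc 1 K, e t := by
    calc (primeSet m n).card = ∑ _p ∈ primeSet m n, 1 := by simp
      _ ≤ ∑ p ∈ primeSet m n, e p := Finset.sum_le_sum hprime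
      _ ≤ ∑ t ∈ Finset.Icc 1 K, e t :=
          Finset.sum_le_sum_of_subset hsubP
  omega
end

section
/- In any perfect game of PackIt! on an m × n grid, every turn p with p prime and n < p ≤ K(m,n) must be an expansion turn, i.e., the rectangle placed at turn p has area p+1. -/
lemma tri_tau_le (r : ℕ) : tri (tau r) ≤ r :=
  Nat.findGreatest_spec (P := fun k => tri k ≤ r) (Nat.zero_le r) (by simp [tri])

lemma sum_aux : ∀ K : ℕ, (∑ t ∈ Finset.Icc 1 K, (t+1)) + 1 = tri (K+1)
  | 0 => by simp [tri]
  | K+1 => by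
      rw [Finset.sum_Icc_succ_top (by omega), tri_succ (K+1)]
      have := sum_aux K
      omega

lemma rectCells_card (pos dim : ℕ × ℕ) :
    (rectCells pos dim).card = dim.1 * dim.2 := by
  simp [rectCells]

/-- In any perfect game of PackIt! on the `m × n` grid, every turn `p` with
`p` prime and `n < p ≤ K(m,n)` must be an expansion turn: the rectangle
placed at turn `p` has area `p + 1`. -/
theorem packit_prime_turn_expansion (m n : ℕ) (hm : 0 < m) (hmn : m ≤ n)
    (G : PerfectPackItGame m n) (p : ℕ) (hp : p.Prime) (hnp : n < p)
    (hpK : p ≤ tau (m * n)) :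
    (G.dim p).1 * (G.dim p).2 = p + 1 := by
  -- total area equals m * n
  have hdisj : ∀ t₁ ∈ Finset.Icc 1 G.K, ∀ t₂ ∈ Finset.Icc 1 G.K, t₁ ≠ t₂ →
      Disjoint (rectCells (G.pos t₁) (G.dim t₁)) (rectCells (G.pos t₂) (G.dim t₂)) :=
    G.pairwise_disjoint
  have hsum : ∑ t ∈ Finset.Icc 1 G.K, ((G.dim t).1 * (G.dim t).2) = m * n := by
    have h1 := Finset.card_biUnion hdisj
    rw [G.covers] at h1
    simp only [Finset.card_product, Finset.card_range] at h1
    rw [h1]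
    exact Finset.sum_congr rfl fun t _ => (rectCells_card (G.pos t) (G.dim t)).symm
  -- m * n ≤ sum of (t+1)
  have hub : m * n ≤ ∑ t ∈ Finset.Icc 1 G.K, (t + 1) := by
    rw [← hsum]
    refine Finset.sum_le_sum fun t ht => ?_
    rcases G.area_valid t ht with h | h <;> omega
  have hlt : m * n < tri (G.K + 1) := by
    have := sum_aux G.K; omega
  -- tau (m*n) ≤ G.K
  have htau : tau (m * n) ≤ G.K := by
    by_contra hc
    push_neg at hc
    have h1 : tri (G.K + 1) ≤ tri (tau (m * n)) := tri_mono hc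
    have h2 := tri_tau_le (m * n)
    omega
  have hpmem : p ∈ Finset.Icc 1 G.K := by
    simp only [Finset.mem_Icc]
    exact ⟨hp.one_lt.le.trans' (by omega), le_trans hpK htau⟩
  rcases G.area_valid p hpmem with h | h
  · -- area = p, prime: one dimension equals p, but both are < p
    exfalso
    have hsub : rectCells (G.pos p) (G.dim p) ⊆ Finset.range m ×ˢ Finset.range n := by
      rw [← G.covers]
      exact Finset.subset_biUnion_of_mem (fun t => rectCells (G.pos t) (G.dim t)) hpmem
    have hd1 : 0 < (G.dim p).1 := by
      rcases Nat.eq_zero_or_pos (G.dim p).1 with h0 | h0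
      · rw [h0, zero_mul] at h; exact absurd h.symm hp.ne_zero
      · exact h0
    have hd2 : 0 < (G.dim p).2 := by
      rcases Nat.eq_zero_or_pos (G.dim p).2 with h0 | h0
      · rw [h0, mul_zero] at h; exact absurd h.symm hp.ne_zero
      · exact h0
    have hcell : ((G.pos p).1, (G.pos p).2) ∈ rectCells (G.pos p) (G.dim p) := by
      simp [rectCells, Finset.mem_Ico]; omega
    have hcell2 : ((G.pos p).1 + (G.dim p).1 - 1, (G.pos p).2 + (G.dim p).2 - 1)
        ∈ rectCells (G.pos p) (G.dim p) := by
      simp [rectCells, Finset.mem_Ico]; omega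
    have hin := hsub hcell2
    simp only [Finset.mem_product, Finset.mem_range] at hin
    have hle1 : (G.dim p).1 ≤ m := by omega
    have hle2 : (G.dim p).2 ≤ n := by omega
    -- prime factorization
    rcases (Nat.Prime.eq_one_or_self_of_dvd hp (G.dim p).1 ⟨(G.dim p).2, h.symm⟩) with h1 | h1
    · have : (G.dim p).2 = p := by rw [h1, one_mul] at h; exact h
      omega
    · omega
  · exact h
end

section
/- The 6 × 6 grid does not admit a perfect game of PackIt!. -/
lemma rect_card (p d : ℕ × ℕ) : (rectCells p d).card = d.1 * d.2 := by
  simp [rectCells]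

/-- The `6 × 6` grid does not admit a perfect game of PackIt!. -/
theorem packit_no_perfect_6x6 : IsEmpty (PerfectPackItGame 6 6) := by
  constructor
  intro g
  -- total area = 36
  have hsum : ∑ t ∈ Finset.Icc 1 g.K, (g.dim t).1 * (g.dim t).2 = 36 := by
    have := Finset.card_biUnion (s := Finset.Icc 1 g.K)
      (t := fun t => rectCells (g.pos t) (g.dim t)) g.pairwise_disjoint
    rw [g.covers] at this
    simp only [rect_card] at this
    simpa using this.symm
  have hbound : ∀ t ∈ Finset.Icc 1 g.K,
      t ≤ (g.dim t).1 * (g.dim t).2 ∧ (g.dim t).1 * (g.dim t).2 ≤ t + 1 := by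
    intro t ht
    rcases g.area_valid t ht with h | h <;> omega
  -- K = 8
  have hlow : ∑ t ∈ Finset.Icc 1 g.K, t ≤ 36 := by
    rw [← hsum]
    exact Finset.sum_le_sum fun t ht => (hbound t ht).1
  have hhigh : 36 ≤ ∑ t ∈ Finset.Icc 1 g.K, (t + 1) := by
    rw [← hsum]
    exact Finset.sum_le_sum fun t ht => (hbound t ht).2
  have hgauss : ∀ n : ℕ, (∑ t ∈ Finset.Icc 1 n, t) * 2 = n * (n + 1) := by
    intro n
    induction n with
    | zero => simp
    | succ n ih =>
      rw [Finset.sum_Icc_succ_top (by omega), add_mul]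
      nlinarith [ih]
  have hcard : (Finset.Icc 1 g.K).card = g.K := by simp
  have hhigh' : 72 ≤ g.K * (g.K + 1) + 2 * g.K := by
    rw [Finset.sum_add_distrib, Finset.sum_const, hcard, smul_eq_mul, mul_one] at hhigh
    nlinarith [hgauss g.K]
  have hlow' : g.K * (g.K + 1) ≤ 72 := by nlinarith [hgauss g.K]
  have hK8 : g.K = 8 := by
    have h2 : g.K ≤ 8 := by nlinarith
    interval_cases h : g.K <;> omega
  -- all areas exact: sum = 36 = T_8 and a_t ≥ t
  have hexact : ∀ t ∈ Finset.Icc 1 g.K, (g.dim t).1 * (g.dim t).2 = t := by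
    have heq : ∑ t ∈ Finset.Icc 1 g.K, t
        = ∑ t ∈ Finset.Icc 1 g.K, (g.dim t).1 * (g.dim t).2 := by
      have := hgauss g.K
      rw [hK8] at this hsum ⊢
      omega
    intro t ht
    exact ((Finset.sum_eq_sum_iff_of_le fun i hi => (hbound i hi).1).mp heq t ht).symm
  -- turn 7: area 7
  have h7 : (7 : ℕ) ∈ Finset.Icc 1 g.K := by rw [hK8]; decide
  have harea7 : (g.dim 7).1 * (g.dim 7).2 = 7 := hexact 7 h7
  have hd1 : 1 ≤ (g.dim 7).1 := Nat.pos_of_ne_zero (fun h => by simp [h] at harea7)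
  have hd2 : 1 ≤ (g.dim 7).2 := Nat.pos_of_ne_zero (fun h => by simp [h] at harea7)
  -- the corner cell of rectangle 7 lies in the grid
  have hsub : rectCells (g.pos 7) (g.dim 7) ⊆ Finset.range 6 ×ˢ Finset.range 6 := by
    rw [← g.covers]
    exact Finset.subset_biUnion_of_mem (fun t => rectCells (g.pos t) (g.dim t)) h7
  have hmem : ((g.pos 7).1 + (g.dim 7).1 - 1, (g.pos 7).2 + (g.dim 7).2 - 1)
      ∈ rectCells (g.pos 7) (g.dim 7) := by
    simp only [rectCells, Finset.mem_product, Finset.mem_Ico]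
    omega
  have := hsub hmem
  simp only [Finset.mem_product, Finset.mem_range] at this
  -- so both dimensions are ≤ 6, contradicting d1 * d2 = 7 (prime)
  have hd1le : (g.dim 7).1 ≤ 6 := by omega
  have hd2le : (g.dim 7).2 ≤ 6 := by omega
  interval_cases h1 : (g.dim 7).1 <;> interval_cases h2 : (g.dim 7).2 <;> omega
end

section
/- The 18 × 18 grid does not admit a perfect game of PackIt!. -/
/-- The `18 × 18` grid does not admit a perfect game of PackIt!. -/
theorem packit_no_perfect_18x18 : IsEmpty (PerfectPackItGame 18 18) := by
  constructor
  intro g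
  set f : ℕ → ℕ := fun t => (g.dim t).1 * (g.dim t).2 with hf
  have hcard : ∀ t, (rectCells (g.pos t) (g.dim t)).card = f t := by
    intro t
    simp [rectCells, Finset.card_product, hf]
  have hsum : ∑ t ∈ Finset.Icc 1 g.K, f t = 324 := by
    have h1 : ((Finset.Icc 1 g.K).biUnion
        (fun t => rectCells (g.pos t) (g.dim t))).card
        = ∑ t ∈ Finset.Icc 1 g.K, (rectCells (g.pos t) (g.dim t)).card :=
      Finset.card_biUnion (fun t ht s hs hts => g.pairwise_disjoint t ht s hs hts)
    rw [g.covers] at h1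
    simp only [hcard] at h1
    simpa using h1.symm
  have hlow : ∀ t ∈ Finset.Icc 1 g.K, t ≤ f t := by
    intro t ht; have := g.area_valid t ht; simp only [hf]; omega
  have hhigh : ∀ t ∈ Finset.Icc 1 g.K, f t ≤ t + 1 := by
    intro t ht; have := g.area_valid t ht; simp only [hf]; omega
  have h325 : ∑ t ∈ Finset.Icc 1 25, t = 325 := by decide
  have h299 : ∑ t ∈ Finset.Icc 1 23, (t + 1) = 299 := by decide
  have hKle : g.K ≤ 24 := by
    by_contra h
    push_neg at h
    have hsub : Finset.Icc 1 25 ⊆ Finset.Icc 1 g.K :=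
      Finset.Icc_subset_Icc_right h
    have hge : (325 : ℕ) ≤ ∑ t ∈ Finset.Icc 1 g.K, f t := by
      calc (325 : ℕ) = ∑ t ∈ Finset.Icc 1 25, t := h325.symm
        _ ≤ ∑ t ∈ Finset.Icc 1 25, f t :=
            Finset.sum_le_sum (fun t ht => hlow t (hsub ht))
        _ ≤ ∑ t ∈ Finset.Icc 1 g.K, f t :=
            Finset.sum_le_sum_of_subset hsub
    omega
  have hKge : 24 ≤ g.K := by
    by_contra h
    push_neg at h
    have hsub : Finset.Icc 1 g.K ⊆ Finset.Icc 1 23 :=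
      Finset.Icc_subset_Icc_right (by omega)
    have hle : ∑ t ∈ Finset.Icc 1 g.K, f t ≤ 299 := by
      calc ∑ t ∈ Finset.Icc 1 g.K, f t
          ≤ ∑ t ∈ Finset.Icc 1 g.K, (t + 1) := Finset.sum_le_sum hhigh
        _ ≤ ∑ t ∈ Finset.Icc 1 23, (t + 1) :=
            Finset.sum_le_sum_of_subset hsub
        _ = 299 := h299
    omega
  have hK : g.K = 24 := le_antisymm hKle hKge
  rw [hK] at hsum hhigh
  have h324 : ∑ t ∈ Finset.Icc 1 24, (t + 1) = 324 := by decide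
  have heq : ∀ t ∈ Finset.Icc 1 24, f t = t + 1 :=
    (Finset.sum_eq_sum_iff_of_le hhigh).mp (by rw [hsum, h324])
  have h23 : (g.dim 22).1 * (g.dim 22).2 = 23 := heq 22 (by decide)
  have hsub22 : rectCells (g.pos 22) (g.dim 22) ⊆
      Finset.range 18 ×ˢ Finset.range 18 := by
    rw [← g.covers, hK]
    exact Finset.subset_biUnion_of_mem (fun t => rectCells (g.pos t) (g.dim t))
      (show (22 : ℕ) ∈ Finset.Icc 1 24 by decide)
  set d1 := (g.dim 22).1 with hd1
  set d2 := (g.dim 22).2 with hd2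
  have hpos1 : 0 < d1 := Nat.pos_of_ne_zero (fun h => by simp [h] at h23)
  have hpos2 : 0 < d2 := Nat.pos_of_ne_zero (fun h => by simp [h] at h23)
  have hmem : ((g.pos 22).1 + d1 - 1, (g.pos 22).2 + d2 - 1) ∈
      rectCells (g.pos 22) (g.dim 22) := by
    simp only [rectCells, Finset.mem_product, Finset.mem_Ico, ← hd1, ← hd2]
    constructor <;> constructor <;> omega
  have hin := hsub22 hmem
  simp only [Finset.mem_product, Finset.mem_range] at hin
  have hb1 : d1 ≤ 18 := by omega
  have hb2 : d2 ≤ 18 := by omega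
  interval_cases d1 <;> omega
end

section
/- For every integer c ≥ 0, there are only finitely many positive integers n such that the number of primes p with n < p ≤ τ(n²) is at most c; that is, the set {n ∈ ℕ⁺ : |P(n,n)| ≤ c} is finite. -/
noncomputable section
namespace Cheb
open Finset Real

def PP (n : ℕ) : Finset ℕ := (Finset.range (n+1)).filter Nat.Prime
def th (n : ℕ) : ℝ := ∑ p ∈ PP n, Real.log p
def psi (n : ℕ) : ℝ := ∑ p ∈ PP n, (Nat.log p n : ℝ) * Real.log p
def TT (n : ℕ) : ℝ := Real.log (Nat.factorial n)
def SS (n : ℕ) : ℝ := TT n - TT (n/2) - TT (n/3) - TT (n/5) + TT (n/30)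
def AA : ℝ := Real.log 2/2 + Real.log 3/3 + Real.log 5/5 - Real.log 30/30
def gR (m : ℕ) : ℝ := ((m:ℝ) + ((m/30 : ℕ):ℝ)) - ((m/2 : ℕ):ℝ) - ((m/3 : ℕ):ℝ) - ((m/5 : ℕ):ℝ)


section
open Finset Real

lemma gR_nonneg (m : ℕ) : 0 ≤ gR m := by
  have h : m/2 + m/3 + m/5 ≤ m + m/30 := by omega
  unfold gR; push_cast; have := Nat.cast_le (α := ℝ).2 h; push_cast at this; linarith

lemma gR_le_one (m : ℕ) : gR m ≤ 1 := by
  have h : m + m/30 ≤ m/2 + m/3 + m/5 + 1 := by omega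
  unfold gR; have := Nat.cast_le (α := ℝ).2 h; push_cast at this; linarith

lemma gR_ge_one {m : ℕ} (h1 : 1 ≤ m) (h5 : m ≤ 5) : 1 ≤ gR m := by
  have h : m/2 + m/3 + m/5 + 1 ≤ m + m/30 := by omega
  unfold gR; have := Nat.cast_le (α := ℝ).2 h; push_cast at this; linarith

lemma gR_zero : gR 0 = 0 := by simp [gR]

lemma TT_lower : ∀ n : ℕ, 1 ≤ n → (n:ℝ) * Real.log n - n + 1 ≤ TT n := by
  intro n
  induction n with
  | zero => intro h; omega
  | succ n ih =>
    intro _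
    rcases Nat.eq_zero_or_pos n with rfl | hn
    · simp [TT]
    have hn1 : (0:ℝ) < n := by exact_mod_cast hn
    have hstep : TT (n+1) = TT n + Real.log (n+1) := by
      unfold TT
      rw [Nat.factorial_succ]
      push_cast
      rw [Real.log_mul (by positivity) (by positivity)]
      ring
    have ih' := ih hn
    -- key : (n+1) log (n+1) - n log n ≤ 1 + log (n+1)
    have hkey : (n:ℝ) * (Real.log (n+1) - Real.log n) ≤ 1 := by
      have h1 : Real.log ((n+1)/n) ≤ (n+1)/n - 1 := Real.log_le_sub_one_of_pos (by positivity)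
      rw [Real.log_div (by positivity) (by positivity)] at h1
      have h2 : ((n:ℝ)+1)/n - 1 = 1/n := by field_simp; ring
      rw [h2] at h1
      calc (n:ℝ) * (Real.log (n+1) - Real.log n) ≤ (n:ℝ) * (1/n) := by
            apply mul_le_mul_of_nonneg_left h1 (le_of_lt hn1)
        _ = 1 := by field_simp
    rw [hstep]; push_cast
    nlinarith [Real.log_nonneg (by norm_num : (1:ℝ) ≤ (n:ℝ)+1)]

lemma TT_upper : ∀ n : ℕ, 1 ≤ n → TT n ≤ ((n:ℝ)+1) * Real.log n - n + 1 := by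
  intro n
  induction n with
  | zero => intro h; omega
  | succ n ih =>
    intro _
    rcases Nat.eq_zero_or_pos n with rfl | hn
    · simp [TT]
    have hn1 : (0:ℝ) < n := by exact_mod_cast hn
    have hstep : TT (n+1) = TT n + Real.log (n+1) := by
      unfold TT
      rw [Nat.factorial_succ]
      push_cast
      rw [Real.log_mul (by positivity) (by positivity)]
      ring
    have ih' := ih hn
    -- key : 1 ≤ (n+1)(log(n+1) - log n)
    have hkey : 1 ≤ ((n:ℝ)+1) * (Real.log (n+1) - Real.log n) := by
      have h1 : Real.log ((n:ℝ)/(n+1)) ≤ (n:ℝ)/(n+1) - 1 := Real.log_le_sub_one_of_pos (by positivity)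
      rw [Real.log_div (by positivity) (by positivity)] at h1
      have h2 : (n:ℝ)/(n+1) - 1 = -(1/(n+1)) := by field_simp; ring
      rw [h2] at h1
      have : 1/((n:ℝ)+1) ≤ Real.log (n+1) - Real.log n := by linarith
      calc (1:ℝ) = ((n:ℝ)+1) * (1/(n+1)) := by field_simp
        _ ≤ ((n:ℝ)+1) * (Real.log (n+1) - Real.log n) := by
            apply mul_le_mul_of_nonneg_left this (by positivity)
    rw [hstep]; push_cast
    nlinarith [Real.log_nonneg (by norm_num : (1:ℝ) ≤ (n:ℝ)+1)]


lemma PP_mono {m n : ℕ} (h : m ≤ n) : PP m ⊆ PP n := by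
  unfold PP
  exact Finset.filter_subset_filter _ (Finset.range_subset_range.2 (by omega))

lemma mem_PP {p n : ℕ} (hp : p ∈ PP n) : p.Prime ∧ p ≤ n := by
  unfold PP at hp
  simp only [Finset.mem_filter, Finset.mem_range] at hp
  exact ⟨hp.2, by omega⟩

lemma mem_PP_iff {p n : ℕ} : p ∈ PP n ↔ p.Prime ∧ p ≤ n := by
  unfold PP
  simp only [Finset.mem_filter, Finset.mem_range]
  constructor
  · rintro ⟨h1, h2⟩; exact ⟨h2, by omega⟩
  · rintro ⟨h1, h2⟩; exact ⟨by omega, h1⟩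

lemma TT_eq {m n : ℕ} (h : m ≤ n) :
    TT m = ∑ p ∈ PP n, ((Nat.factorial m).factorization p : ℝ) * Real.log p := by
  have hm0 : Nat.factorial m ≠ 0 := Nat.factorial_ne_zero m
  have hsupp : (Nat.factorial m).factorization.support ⊆ PP n := by
    intro p hp
    rw [Nat.support_factorization] at hp
    have hpp := Nat.prime_of_mem_primeFactors hp
    have hdvd := Nat.dvd_of_mem_primeFactors hp
    have : p ≤ m := (Nat.Prime.dvd_factorial hpp).1 hdvd
    exact mem_PP_iff.2 ⟨hpp, le_trans this h⟩
  have hprod : (Nat.factorial m : ℝ) = ∏ p ∈ PP n, (p:ℝ) ^ (Nat.factorial m).factorization p := by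
    have h1 := Nat.factorization_prod_pow_eq_self hm0
    calc (Nat.factorial m : ℝ) = ((Nat.factorial m).factorization.prod (· ^ ·) : ℕ) := by rw [h1]
      _ = ∏ p ∈ PP n, (p:ℝ) ^ (Nat.factorial m).factorization p := by
          rw [Finsupp.prod_of_support_subset _ hsupp _ (by intro i _; simp)]
          push_cast
          rfl
  unfold TT
  rw [hprod, Real.log_prod]
  · apply Finset.sum_congr rfl
    intro p hp
    rw [Real.log_pow]
  · intro p hp
    have := (mem_PP hp).1.pos
    positivity

lemma legendre {p m n : ℕ} (hp : p.Prime) (hm : m ≤ n) :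
    ((Nat.factorial m).factorization p : ℝ)
      = ∑ i ∈ Finset.Ico 1 (Nat.log 2 n + 1), ((m / p^i : ℕ) : ℝ) := by
  haveI : Fact p.Prime := ⟨hp⟩
  have hb : Nat.log p m < Nat.log 2 n + 1 := by
    have h1 : Nat.log p m ≤ Nat.log 2 m := Nat.log_anti_left (by norm_num) hp.two_le
    have h2 : Nat.log 2 m ≤ Nat.log 2 n := Nat.log_mono_right hm
    omega
  rw [Nat.factorization_def _ hp, padicValNat_factorial hb]
  push_cast
  rfl


lemma SS_eq (n : ℕ) :
    SS n = ∑ p ∈ PP n, (∑ i ∈ Finset.Ico 1 (Nat.log 2 n + 1), gR (n / p^i)) * Real.log p := by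
  have hd : ∀ d : ℕ, 0 < d → TT (n/d)
      = ∑ p ∈ PP n, (∑ i ∈ Finset.Ico 1 (Nat.log 2 n + 1), (((n / p^i) / d : ℕ) : ℝ)) * Real.log p := by
    intro d hd0
    rw [TT_eq (Nat.div_le_self n d)]
    apply Finset.sum_congr rfl
    intro p hp
    rw [legendre (mem_PP hp).1 (Nat.div_le_self n d)]
    congr 1
    apply Finset.sum_congr rfl
    intro i _
    rw [Nat.div_div_eq_div_mul, Nat.div_div_eq_div_mul, Nat.mul_comm]
  have h1 : TT n = ∑ p ∈ PP n, (∑ i ∈ Finset.Ico 1 (Nat.log 2 n + 1), ((n / p^i : ℕ) : ℝ)) * Real.log p := by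
    rw [TT_eq (le_refl n)]
    apply Finset.sum_congr rfl
    intro p hp
    rw [legendre (mem_PP hp).1 (le_refl n)]
  unfold SS
  rw [h1, hd 2 (by norm_num), hd 3 (by norm_num), hd 5 (by norm_num), hd 30 (by norm_num)]
  rw [← Finset.sum_sub_distrib, ← Finset.sum_sub_distrib, ← Finset.sum_sub_distrib, ← Finset.sum_add_distrib]
  apply Finset.sum_congr rfl
  intro p _
  unfold gR
  rw [Finset.sum_sub_distrib, Finset.sum_sub_distrib, Finset.sum_sub_distrib, Finset.sum_add_distrib]
  ring

lemma logp_nonneg {p n : ℕ} (hp : p ∈ PP n) : 0 ≤ Real.log p :=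
  Real.log_nonneg (by exact_mod_cast (mem_PP hp).1.one_lt.le)

lemma log_le_K {p n : ℕ} (hp : p ∈ PP n) : Nat.log p n + 1 ≤ Nat.log 2 n + 1 := by
  have := Nat.log_anti_left (b := p) (by norm_num) (mem_PP hp).1.two_le (n := n)
  omega

-- per-prime upper bound
lemma w_le {p n : ℕ} (hp : p ∈ PP n) :
    ∑ i ∈ Finset.Ico 1 (Nat.log 2 n + 1), gR (n / p^i) ≤ (Nat.log p n : ℝ) := by
  obtain ⟨hpp, hpn⟩ := mem_PP hp
  set L := Nat.log p n with hL
  have hsplit : Finset.Ico 1 (Nat.log 2 n + 1)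
      = Finset.Ico 1 (L+1) ∪ Finset.Ico (L+1) (Nat.log 2 n + 1) :=
    (Finset.Ico_union_Ico_eq_Ico (by omega) (log_le_K hp)).symm
  rw [hsplit, Finset.sum_union (Finset.Ico_disjoint_Ico_consecutive 1 (L+1) _)]
  have h1 : ∑ i ∈ Finset.Ico 1 (L+1), gR (n / p^i) ≤ (L : ℝ) := by
    calc ∑ i ∈ Finset.Ico 1 (L+1), gR (n / p^i) ≤ ∑ i ∈ Finset.Ico 1 (L+1), 1 :=
        Finset.sum_le_sum (fun i _ => gR_le_one _)
      _ = (L : ℝ) := by simp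
  have h2 : ∑ i ∈ Finset.Ico (L+1) (Nat.log 2 n + 1), gR (n / p^i) = 0 := by
    apply Finset.sum_eq_zero
    intro i hi
    have hi1 : L + 1 ≤ i := (Finset.mem_Ico.1 hi).1
    have : n < p ^ i := by
      calc n < p ^ (L+1) := Nat.lt_pow_succ_log_self hpp.one_lt n
        _ ≤ p ^ i := Nat.pow_le_pow_right hpp.pos hi1
    rw [Nat.div_eq_of_lt this, gR_zero]
  linarith

lemma SS_le_psi (n : ℕ) : SS n ≤ psi n := by
  rw [SS_eq]
  apply Finset.sum_le_sum
  intro p hp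
  exact mul_le_mul_of_nonneg_right (w_le hp) (logp_nonneg hp)

lemma psi_extend {m n : ℕ} (h : m ≤ n) :
    psi m = ∑ p ∈ PP n, (Nat.log p m : ℝ) * Real.log p := by
  apply Finset.sum_subset (PP_mono h)
  intro p hp hnot
  have hpm : ¬ (p ≤ m) := fun hc => hnot (mem_PP_iff.2 ⟨(mem_PP hp).1, hc⟩)
  have : Nat.log p m = 0 := Nat.log_eq_zero_iff.2 (Or.inl (by omega))
  rw [this]; simp

lemma psi_sub_le_SS {n : ℕ} (hn : 6 ≤ n) : psi n - psi (n/6) ≤ SS n := by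
  rw [SS_eq, psi_extend (Nat.div_le_self n 6)]
  unfold psi
  rw [← Finset.sum_sub_distrib]
  apply Finset.sum_le_sum
  intro p hp
  obtain ⟨hpp, hpn⟩ := mem_PP hp
  rw [← sub_mul]
  apply mul_le_mul_of_nonneg_right _ (logp_nonneg hp)
  set L := Nat.log p n with hL
  set L6 := Nat.log p (n/6) with hL6
  have hle : L6 ≤ L := Nat.log_mono_right (Nat.div_le_self n 6)
  have hsub : Finset.Ico (L6+1) (L+1) ⊆ Finset.Ico 1 (Nat.log 2 n + 1) := by
    apply Finset.Ico_subset_Ico (by omega) (log_le_K hp)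
  calc (L : ℝ) - (L6 : ℝ) = ∑ i ∈ Finset.Ico (L6+1) (L+1), (1:ℝ) := by
        rw [Finset.sum_const, Nat.card_Ico]
        have : L + 1 - (L6 + 1) = L - L6 := by omega
        rw [this, nsmul_eq_mul, mul_one, Nat.cast_sub hle]
    _ ≤ ∑ i ∈ Finset.Ico (L6+1) (L+1), gR (n / p^i) := by
        apply Finset.sum_le_sum
        intro i hi
        obtain ⟨hi1, hi2⟩ := Finset.mem_Ico.1 hi
        have hpi_le : p ^ i ≤ n := by
          calc p ^ i ≤ p ^ L := Nat.pow_le_pow_right hpp.pos (by omega)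
            _ ≤ n := Nat.pow_log_le_self p (by omega)
        have hlow : 1 ≤ n / p ^ i := (Nat.one_le_div_iff (pow_pos hpp.pos i)).2 hpi_le
        have hhigh : n / p ^ i ≤ 5 := by
          have h6 : n / 6 < p ^ i := by
            calc n / 6 < p ^ (L6 + 1) := Nat.lt_pow_succ_log_self hpp.one_lt _
              _ ≤ p ^ i := Nat.pow_le_pow_right hpp.pos hi1
          have hlt : n / p ^ i < 6 := by
            apply (Nat.div_lt_iff_lt_mul (pow_pos hpp.pos i)).2
            set t := p ^ i
            omega
          omega
        exact gR_ge_one hlow hhigh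
    _ ≤ ∑ i ∈ Finset.Ico 1 (Nat.log 2 n + 1), gR (n / p^i) := by
        apply Finset.sum_le_sum_of_subset_of_nonneg hsub
        intro i _ _
        exact gR_nonneg _

lemma th_le_psi (n : ℕ) : th n ≤ psi n := by
  apply Finset.sum_le_sum
  intro p hp
  obtain ⟨hpp, hpn⟩ := mem_PP hp
  have h1 : 1 ≤ Nat.log p n := Nat.log_pos hpp.one_lt hpn
  nlinarith [logp_nonneg hp, Nat.one_le_cast (α := ℝ).2 h1]

lemma psi_le_th_add {n : ℕ} (hn : 1 ≤ n) :
    psi n ≤ th n + (Nat.sqrt n : ℝ) * Real.log n := by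
  have key : ∀ p ∈ PP n, (Nat.log p n : ℝ) * Real.log p
      ≤ Real.log p + (if p*p ≤ n then Real.log n else 0) := by
    intro p hp
    obtain ⟨hpp, hpn⟩ := mem_PP hp
    have h1 : 1 ≤ Nat.log p n := Nat.log_pos hpp.one_lt hpn
    by_cases hps : p*p ≤ n
    · rw [if_pos hps]
      set L := Nat.log p n with hL
      have hp0 : (0:ℝ) < p := by exact_mod_cast hpp.pos
      have hpL : (p:ℝ) ^ L ≤ n := by
        exact_mod_cast Nat.pow_log_le_self p (by omega)
      have hlog : (L : ℝ) * Real.log p ≤ Real.log n := by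
        rw [← Real.log_pow]
        apply Real.log_le_log (by positivity) hpL
      nlinarith [logp_nonneg hp]
    · rw [if_neg hps]
      have h2 : Nat.log p n < 2 := by
        apply Nat.log_lt_of_lt_pow (by omega)
        rw [pow_two]; omega
      have : Nat.log p n = 1 := by omega
      rw [this]; simp
  calc psi n ≤ ∑ p ∈ PP n, (Real.log p + (if p*p ≤ n then Real.log n else 0)) :=
      Finset.sum_le_sum key
    _ = th n + ∑ p ∈ (PP n).filter (fun p => p*p ≤ n), Real.log n := by
        unfold th
        rw [Finset.sum_add_distrib, Finset.sum_filter]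
    _ ≤ th n + (Nat.sqrt n : ℝ) * Real.log n := by
        have hsub : (PP n).filter (fun p => p*p ≤ n) ⊆ Finset.Ico 1 (Nat.sqrt n + 1) := by
          intro p hp
          obtain ⟨hp1, hp2⟩ := Finset.mem_filter.1 hp
          have hpp := (mem_PP hp1).1
          rw [Finset.mem_Ico]
          constructor
          · exact hpp.pos
          · have : p ≤ Nat.sqrt n := Nat.le_sqrt.2 (by nlinarith)
            omega
        have hcard : ((PP n).filter (fun p => p*p ≤ n)).card ≤ Nat.sqrt n := by
          have := Finset.card_le_card hsub
          rw [Nat.card_Ico] at this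
          omega
        have := Finset.sum_const (b := Real.log n) (s := (PP n).filter (fun p => p*p ≤ n))
        rw [Finset.sum_const, nsmul_eq_mul]
        have hln : 0 ≤ Real.log n := Real.log_natCast_nonneg n
        have : (((PP n).filter (fun p => p*p ≤ n)).card : ℝ) ≤ (Nat.sqrt n : ℝ) :=
          Nat.cast_le.2 hcard
        nlinarith

lemma Tnear_up {m : ℕ} {r : ℝ} (hm : 1 ≤ m) (h1 : (m:ℝ) ≤ r) (h2 : r ≤ (m:ℝ)+1) :
    TT m ≤ r * Real.log r - r + Real.log r + 2 := by
  have hm0 : (0:ℝ) < m := by exact_mod_cast hm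
  have hr0 : 0 < r := lt_of_lt_of_le hm0 h1
  have hlm : Real.log m ≤ Real.log r := Real.log_le_log hm0 h1
  have hlm0 : 0 ≤ Real.log m := Real.log_nonneg (by exact_mod_cast hm)
  have hlr0 : 0 ≤ Real.log r := le_trans hlm0 hlm
  have h := TT_upper m hm
  nlinarith [mul_le_mul (show (m:ℝ)+1 ≤ r+1 by linarith) hlm hlm0 (by linarith : (0:ℝ) ≤ r+1)]

lemma Tnear_lo {m : ℕ} {r : ℝ} (hm : 1 ≤ m) (h1 : (m:ℝ) ≤ r) (h2 : r ≤ (m:ℝ)+1) :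
    r * Real.log r - r - Real.log r ≤ TT m := by
  have hm0 : (0:ℝ) < m := by exact_mod_cast hm
  have hr0 : 0 < r := lt_of_lt_of_le hm0 h1
  have hlm : Real.log m ≤ Real.log r := Real.log_le_log hm0 h1
  have hlm0 : 0 ≤ Real.log m := Real.log_nonneg (by exact_mod_cast hm)
  have hlr0 : 0 ≤ Real.log r := le_trans hlm0 hlm
  have h := TT_lower m hm
  -- m (log r - log m) ≤ r - m
  have hF : (m:ℝ) * (Real.log r - Real.log m) ≤ r - m := by
    have h3 : Real.log (r/m) ≤ r/m - 1 := Real.log_le_sub_one_of_pos (by positivity)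
    rw [Real.log_div hr0.ne' hm0.ne'] at h3
    have h4 : (m:ℝ) * (Real.log r - Real.log m) ≤ (m:ℝ) * (r/m - 1) :=
      mul_le_mul_of_nonneg_left h3 hm0.le
    have h5 : (m:ℝ) * (r/m - 1) = r - m := by field_simp
    linarith
  nlinarith [mul_nonneg (show (0:ℝ) ≤ r - m by linarith) hlr0,
    mul_le_mul_of_nonneg_right (show r - (m:ℝ) ≤ 1 by linarith) hlr0]

lemma phi_ident {x : ℝ} (hx : 0 < x) :
    (x * Real.log x - x) - ((x/2) * Real.log (x/2) - x/2) - ((x/3) * Real.log (x/3) - x/3)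
      - ((x/5) * Real.log (x/5) - x/5) + ((x/30) * Real.log (x/30) - x/30) = AA * x := by
  rw [Real.log_div hx.ne' (by norm_num), Real.log_div hx.ne' (by norm_num),
    Real.log_div hx.ne' (by norm_num), Real.log_div hx.ne' (by norm_num)]
  unfold AA
  ring

lemma div_facts {n d : ℕ} (hd : 0 < d) (hn : d ≤ n) :
    1 ≤ n/d ∧ ((n/d : ℕ) : ℝ) ≤ (n:ℝ)/d ∧ (n:ℝ)/d ≤ ((n/d : ℕ) : ℝ) + 1 := by
  refine ⟨Nat.one_le_div_iff hd |>.2 hn, Nat.cast_div_le, ?_⟩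
  have h : n < d * (n/d + 1) := by
    have h1 := Nat.div_add_mod n d
    have h2 := Nat.mod_lt n hd
    nlinarith
  have hc : (n:ℝ) < d * (((n/d : ℕ):ℝ) + 1) := by exact_mod_cast h
  have hd' : (0:ℝ) < d := by exact_mod_cast hd
  rw [div_le_iff₀ hd']
  nlinarith

set_option maxHeartbeats 1000000 in
lemma SS_bounds {n : ℕ} (hn : 60 ≤ n) :
    AA * (n:ℝ) - (5*Real.log n + 9) ≤ SS n ∧ SS n ≤ AA * (n:ℝ) + (5*Real.log n + 9) := by
  have hn1 : 1 ≤ n := by omega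
  have hx0 : (0:ℝ) < n := by exact_mod_cast hn1
  have hlx0 : 0 ≤ Real.log n := Real.log_natCast_nonneg n
  obtain ⟨h2a, h2b, h2c⟩ := div_facts (show 0 < 2 by norm_num) (show 2 ≤ n by omega)
  obtain ⟨h3a, h3b, h3c⟩ := div_facts (show 0 < 3 by norm_num) (show 3 ≤ n by omega)
  obtain ⟨h5a, h5b, h5c⟩ := div_facts (show 0 < 5 by norm_num) (show 5 ≤ n by omega)
  obtain ⟨h30a, h30b, h30c⟩ := div_facts (show 0 < 30 by norm_num) (show 30 ≤ n by omega)
  have l2 : Real.log ((n:ℝ)/2) ≤ Real.log n := Real.log_le_log (by positivity) (by linarith)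
  have l3 : Real.log ((n:ℝ)/3) ≤ Real.log n := Real.log_le_log (by positivity) (by linarith)
  have l5 : Real.log ((n:ℝ)/5) ≤ Real.log n := Real.log_le_log (by positivity) (by linarith)
  have l30 : Real.log ((n:ℝ)/30) ≤ Real.log n := Real.log_le_log (by positivity) (by linarith)
  have u2 := Tnear_up h2a h2b h2c
  have u3 := Tnear_up h3a h3b h3c
  have u5 := Tnear_up h5a h5b h5c
  have u30 := Tnear_up h30a h30b h30c
  have w2 := Tnear_lo h2a h2b h2c
  have w3 := Tnear_lo h3a h3b h3c
  have w5 := Tnear_lo h5a h5b h5c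
  have w30 := Tnear_lo h30a h30b h30c
  have tl := TT_lower n hn1
  have tu := TT_upper n hn1
  have hid := phi_ident hx0
  unfold SS
  constructor <;> linarith


lemma log3_lt : Real.log 3 < 2 * Real.log 2 := by
  calc Real.log 3 < Real.log 4 := Real.log_lt_log (by norm_num) (by norm_num)
    _ = 2 * Real.log 2 := by
        rw [show (4:ℝ) = 2^2 by norm_num, Real.log_pow]; push_cast; ring

lemma log5_lt : Real.log 5 < 3 * Real.log 2 := by
  calc Real.log 5 < Real.log 8 := Real.log_lt_log (by norm_num) (by norm_num)
    _ = 3 * Real.log 2 := by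
        rw [show (8:ℝ) = 2^3 by norm_num, Real.log_pow]; push_cast; ring

lemma log30_eq : Real.log 30 = Real.log 2 + Real.log 3 + Real.log 5 := by
  rw [show (30:ℝ) = 2*3*5 by norm_num, Real.log_mul (by norm_num) (by norm_num),
    Real.log_mul (by norm_num) (by norm_num)]

lemma AA_pos : 0 < AA := by
  unfold AA
  rw [log30_eq]
  have h2 : 0 < Real.log 2 := Real.log_pos (by norm_num)
  have h3 : 0 < Real.log 3 := Real.log_pos (by norm_num)
  have h5 : 0 < Real.log 5 := Real.log_pos (by norm_num)
  linarith

lemma AA_le : AA ≤ 2 := by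
  unfold AA
  rw [log30_eq]
  have h2 : Real.log 2 < 0.6931471808 := Real.log_two_lt_d9
  have h2' : 0 < Real.log 2 := Real.log_pos (by norm_num)
  have h3 : 0 < Real.log 3 := Real.log_pos (by norm_num)
  have h5 : 0 < Real.log 5 := Real.log_pos (by norm_num)
  nlinarith [log3_lt, log5_lt]

lemma psi_crude (n : ℕ) : psi n ≤ (n:ℝ) * Real.log n := by
  have hterm : ∀ p ∈ PP n, (Nat.log p n : ℝ) * Real.log p ≤ Real.log n := by
    intro p hp
    obtain ⟨hpp, hpn⟩ := mem_PP hp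
    have hn0 : n ≠ 0 := by have := hpp.two_le; omega
    have hpL : (p:ℝ) ^ (Nat.log p n) ≤ (n:ℝ) := by
      exact_mod_cast Nat.pow_log_le_self p hn0
    rw [← Real.log_pow]
    apply Real.log_le_log _ hpL
    have : (0:ℝ) < p := by exact_mod_cast hpp.pos
    positivity
  calc psi n ≤ ∑ _p ∈ PP n, Real.log n := Finset.sum_le_sum hterm
    _ = (PP n).card * Real.log n := by rw [Finset.sum_const, nsmul_eq_mul]
    _ ≤ (n:ℝ) * Real.log n := by
        apply mul_le_mul_of_nonneg_right _ (Real.log_natCast_nonneg n)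
        have hsub : PP n ⊆ Finset.Ico 1 (n+1) := by
          intro p hp
          obtain ⟨hpp, hpn⟩ := mem_PP hp
          rw [Finset.mem_Ico]
          exact ⟨hpp.pos, by omega⟩
        have := Finset.card_le_card hsub
        rw [Nat.card_Ico] at this
        exact_mod_cast by omega
  
lemma psi_upper : ∀ n : ℕ, psi n ≤ (6*AA/5)*(n:ℝ) + ((Nat.log 6 n : ℝ)+1)*(5*Real.log n + 9) + 250 := by
  intro n
  induction n using Nat.strong_induction_on with
  | _ n ih =>
  have hlx0 : 0 ≤ Real.log n := Real.log_natCast_nonneg n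
  by_cases hn : n < 60
  · -- base case
    have h1 : psi n ≤ (n:ℝ) * Real.log n := psi_crude n
    have h2 : Real.log n ≤ 6 * Real.log 2 := by
      rcases Nat.eq_zero_or_pos n with rfl | hpos
      · simp; positivity
      calc Real.log n ≤ Real.log 64 := Real.log_le_log (by exact_mod_cast hpos) (by exact_mod_cast (by omega : n ≤ 64))
        _ = 6 * Real.log 2 := by
            rw [show (64:ℝ) = 2^6 by norm_num, Real.log_pow]; push_cast; ring
    have h2' : Real.log 2 < 0.6931471808 := Real.log_two_lt_d9
    have hn' : (n:ℝ) ≤ 59 := by exact_mod_cast (by omega : n ≤ 59)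
    have hAA := AA_pos
    have hL0 : (0:ℝ) ≤ (Nat.log 6 n : ℝ) := by positivity
    nlinarith [mul_le_mul hn' h2 hlx0 (by norm_num : (0:ℝ) ≤ 59),
      mul_nonneg hL0 (by linarith : (0:ℝ) ≤ 5*Real.log n + 9)]
  · -- inductive step
    push_neg at hn
    have h6 : 6 ≤ n := by omega
    have hrec := psi_sub_le_SS h6
    have hIH := ih (n/6) (Nat.div_lt_self (by omega) (by norm_num))
    have hSS := (SS_bounds (by omega : 60 ≤ n)).2
    have hL : Nat.log 6 (n/6) = Nat.log 6 n - 1 := Nat.log_div_base 6 n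
    have hL1 : 1 ≤ Nat.log 6 n := Nat.log_pos (by norm_num) h6
    have hcast : ((Nat.log 6 (n/6) : ℕ) : ℝ) + 1 = (Nat.log 6 n : ℝ) := by
      rw [hL, Nat.cast_sub hL1]; ring
    have hlog6 : Real.log ((n/6 : ℕ) : ℝ) ≤ Real.log n := by
      apply Real.log_le_log
      · have : 1 ≤ n/6 := (Nat.one_le_div_iff (by norm_num)).2 h6
        exact_mod_cast this
      · exact_mod_cast Nat.div_le_self n 6
    have hdiv : ((n/6 : ℕ) : ℝ) ≤ (n:ℝ)/6 := Nat.cast_div_le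
    have hAA := AA_pos
    have hmul1 : (6*AA/5) * ((n/6 : ℕ) : ℝ) ≤ (6*AA/5) * ((n:ℝ)/6) :=
      mul_le_mul_of_nonneg_left hdiv (by positivity)
    have hL0 : (0:ℝ) ≤ (Nat.log 6 (n/6) : ℝ) := by positivity
    have hmul2 : ((Nat.log 6 (n/6) : ℕ) : ℝ) * (5*Real.log ((n/6:ℕ):ℝ) + 9)
        ≤ ((Nat.log 6 (n/6) : ℕ) : ℝ) * (5*Real.log n + 9) := by
      apply mul_le_mul_of_nonneg_left _ hL0
      linarith
    have hlog6' : 0 ≤ Real.log ((n/6 : ℕ) : ℝ) := Real.log_natCast_nonneg _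
    nlinarith [hmul2, hcast]

lemma AA_gt : (3:ℝ)/10 < AA := by
  unfold AA
  rw [log30_eq]
  have h2 : (0.6931471803:ℝ) < Real.log 2 := Real.log_two_gt_d9
  have h3 : 0 < Real.log 3 := Real.log_pos (by norm_num)
  have h5 : 0 < Real.log 5 := Real.log_pos (by norm_num)
  nlinarith

lemma tau_lb {n : ℕ} (hn : 35 ≤ n) : 7*n/5 ≤ tau (n*n) := by
  apply Nat.le_findGreatest
  · have h1 : 7*n/5 ≤ 2*n := by omega
    nlinarith
  · show tri (7*n/5) ≤ n*n
    unfold tri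
    set k := 7*n/5 with hk
    have h5 : 5*k ≤ 7*n := by omega
    apply Nat.div_le_of_le_mul
    nlinarith

lemma tau_ub {n : ℕ} (hn : 1 ≤ n) : tau (n*n) ≤ 2*n := by
  by_contra hc
  push_neg at hc
  have h0 : 0 < tau (n*n) := by omega
  have hspec : tri (tau (n*n)) ≤ n*n :=
    Nat.findGreatest_spec (P := fun k => tri k ≤ n*n) (Nat.zero_le _) (by simp [tri])
  set t := tau (n*n) with ht
  have h1 : (2*n+1)*(n+1) ≤ tri t := by
    unfold tri
    rw [Nat.le_div_iff_mul_le (by norm_num)]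
    nlinarith
  nlinarith

lemma tau_gt {n : ℕ} (hn : 35 ≤ n) : n < tau (n*n) := by
  have := tau_lb hn
  omega

lemma th_diff {n m : ℕ} (h : n ≤ m) :
    th m = th n + ∑ p ∈ (Finset.Ioc n m).filter Nat.Prime, Real.log p := by
  unfold th PP
  have hr : Finset.range (m+1) = Finset.range (n+1) ∪ Finset.Ico (n+1) (m+1) := by
    rw [Finset.range_eq_Ico, Finset.range_eq_Ico,
      Finset.Ico_union_Ico_eq_Ico (Nat.zero_le _) (by omega)]
  have hioc : Finset.Ico (n+1) (m+1) = Finset.Ioc n m := by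
    ext x
    simp [Finset.mem_Ico, Finset.mem_Ioc]
  rw [hr, Finset.filter_union, Finset.sum_union, hioc]
  apply Finset.disjoint_filter_filter
  rw [Finset.range_eq_Ico]
  exact Finset.Ico_disjoint_Ico_consecutive 0 (n+1) (m+1)


lemma log_two_le_one : Real.log 2 ≤ 1 := by
  have := Real.log_two_lt_d9
  linarith

lemma main_ineq {n : ℕ} (hn : 60 ≤ n) :
    (AA/5) * (n:ℝ) ≤ ((primeSet n n).card : ℝ) * Real.log (2*(n:ℝ))
      + 2*Real.sqrt n * (Real.log n + 1) + (Real.log n + 1)*(5*Real.log n + 9)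
      + 5*Real.log n + AA + 270 := by
  set m := tau (n*n) with hm
  have hm1 : 7*n/5 ≤ m := tau_lb (by omega)
  have hm2 : m ≤ 2*n := tau_ub (by omega)
  have hmn : n < m := tau_gt (by omega)
  have hm60 : 60 ≤ m := by omega
  have hn0 : (0:ℝ) < n := by exact_mod_cast (by omega : 0 < n)
  have hlogn0 : 0 ≤ Real.log n := Real.log_natCast_nonneg n
  have hlogm0 : 0 ≤ Real.log m := Real.log_natCast_nonneg m
  have hlog2n : Real.log (2*(n:ℝ)) = Real.log 2 + Real.log n :=
    Real.log_mul (by norm_num) hn0.ne'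
  have hlog2n0 : 0 ≤ Real.log (2*(n:ℝ)) := by
    rw [hlog2n]; have := Real.log_pos (by norm_num : (1:ℝ) < 2); linarith
  -- (1) theta difference vs card
  have h1 : th m - th n ≤ ((primeSet n n).card : ℝ) * Real.log (2*(n:ℝ)) := by
    rw [th_diff hmn.le]
    have : ∀ p ∈ (Finset.Ioc n m).filter Nat.Prime, Real.log p ≤ Real.log (2*(n:ℝ)) := by
      intro p hp
      obtain ⟨hp1, _⟩ := Finset.mem_filter.1 hp
      obtain ⟨hpn, hpm⟩ := Finset.mem_Ioc.1 hp1
      apply Real.log_le_log (by exact_mod_cast (by omega : 0 < p))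
      exact_mod_cast (by omega : p ≤ 2*n)
    have hsum := Finset.sum_le_card_nsmul _ _ _ this
    rw [nsmul_eq_mul] at hsum
    have : primeSet n n = (Finset.Ioc n m).filter Nat.Prime := rfl
    rw [this]
    linarith
  -- (2) upper bound on th n
  have hL : (Nat.log 6 n : ℝ) ≤ Real.log n := by
    have hp : (6:ℝ) ^ (Nat.log 6 n) ≤ (n:ℝ) := by
      exact_mod_cast Nat.pow_log_le_self 6 (by omega : n ≠ 0)
    have h6 : (1:ℝ) ≤ Real.log 6 := by
      rw [Real.le_log_iff_exp_le (by norm_num)]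
      have := Real.exp_one_lt_d9
      linarith
    have := Real.log_le_log (by positivity) hp
    rw [Real.log_pow] at this
    nlinarith [Nat.cast_nonneg (α := ℝ) (Nat.log 6 n)]
  have h2 : th n ≤ (6*AA/5)*(n:ℝ) + ((Nat.log 6 n : ℝ)+1)*(5*Real.log n + 9) + 250 :=
    le_trans (th_le_psi n) (psi_upper n)
  -- (3) lower bound on th m
  have h3 : AA * (m:ℝ) - (5*Real.log m + 9) - (Nat.sqrt m : ℝ) * Real.log m ≤ th m := by
    have ha := (SS_bounds hm60).1
    have hb := SS_le_psi m
    have hc := psi_le_th_add (by omega : 1 ≤ m)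
    linarith
  -- bounds on m-quantities
  have hmcast : (7*(n:ℝ) - 4)/5 ≤ (m:ℝ) := by
    have : 7*n ≤ 5*(7*n/5) + 4 := by omega
    have h' : 7*n ≤ 5*m + 4 := by omega
    have := Nat.cast_le (α := ℝ).2 h'
    push_cast at this
    linarith
  have hmcast2 : (m:ℝ) ≤ 2*(n:ℝ) := by exact_mod_cast hm2
  have hlogmle : Real.log m ≤ Real.log n + 1 := by
    have : Real.log m ≤ Real.log (2*(n:ℝ)) :=
      Real.log_le_log (by exact_mod_cast (by omega : 0 < m)) hmcast2
    rw [hlog2n] at this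
    have := log_two_le_one
    linarith
  have hsqm : (Nat.sqrt m : ℝ) ≤ 2*Real.sqrt n := by
    have h1' : (Nat.sqrt m : ℝ) ≤ Real.sqrt m := by
      exact_mod_cast Real.nat_sqrt_le_real_sqrt
    have h2' : Real.sqrt m ≤ Real.sqrt (4*(n:ℝ)) := Real.sqrt_le_sqrt (by linarith)
    have h3' : Real.sqrt (4*(n:ℝ)) = 2*Real.sqrt n := by
      rw [show (4:ℝ)*(n:ℝ) = (2:ℝ)^2 * n by ring, Real.sqrt_mul (by positivity),
        Real.sqrt_sq (by norm_num)]
    linarith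
  have hsqm0 : (0:ℝ) ≤ (Nat.sqrt m : ℝ) := Nat.cast_nonneg _
  have hsq0 : (0:ℝ) ≤ Real.sqrt n := Real.sqrt_nonneg _
  -- products
  have e1 : (Nat.sqrt m : ℝ) * Real.log m ≤ 2*Real.sqrt n * (Real.log n + 1) :=
    mul_le_mul hsqm hlogmle hlogm0 (by positivity)
  have e2 : ((Nat.log 6 n : ℝ)+1)*(5*Real.log n + 9) ≤ (Real.log n + 1)*(5*Real.log n + 9) := by
    apply mul_le_mul_of_nonneg_right (by linarith) (by linarith)
  -- AA * m lower
  have e3 : AA * ((7*(n:ℝ) - 4)/5) ≤ AA * m := mul_le_mul_of_nonneg_left hmcast AA_pos.le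
  have hAA := AA_pos
  have hAAle := AA_le
  nlinarith [h1, h2, h3, e1, e2, e3]


end
end Cheb
end

set_option maxHeartbeats 2000000 in
open Finset Real Cheb in
/-- For every `c ≥ 0`, there are only finitely many positive integers `n`
such that the number of primes `p` with `n < p ≤ τ(n²)` is at most `c`. -/
theorem finitely_many_small_primeSet (c : ℕ) :
    {n : ℕ | 0 < n ∧ (primeSet n n).card ≤ c}.Finite := by
  set N : ℕ := max 60 ((17*(5*c+1500)+1)^4) with hN
  apply Set.Finite.subset (Set.finite_Iio N)
  intro n hn
  simp only [Set.mem_setOf_eq] at hn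
  obtain ⟨-, hcard⟩ := hn
  by_contra hc
  simp only [Set.mem_Iio, not_lt] at hc
  have hn60 : 60 ≤ n := le_trans (le_max_left _ _) hc
  have hnB : (17*(5*c+1500)+1)^4 ≤ n := le_trans (le_max_right _ _) hc
  -- set a = sqrt (sqrt n)
  set a : ℝ := Real.sqrt (Real.sqrt n) with ha
  have hn0 : (0:ℝ) < n := by exact_mod_cast (by omega : 0 < n)
  have hsq : Real.sqrt n * Real.sqrt n = (n:ℝ) := Real.mul_self_sqrt hn0.le
  have haa : a * a = Real.sqrt n := Real.mul_self_sqrt (Real.sqrt_nonneg _)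
  have ha0 : 0 ≤ a := Real.sqrt_nonneg _
  have ha4 : a^4 = (n:ℝ) := by
    have : a^4 = (a*a)*(a*a) := by ring
    rw [this, haa, hsq]
  have h60 : (60:ℝ) ≤ (n:ℝ) := by exact_mod_cast hn60
  have ha1 : 1 ≤ a := by
    by_contra h
    push_neg at h
    have h4 : a^4 < 1 := pow_lt_one₀ ha0 h (by norm_num)
    rw [ha4] at h4
    linarith
  -- a is large
  set B : ℝ := (17*(5*(c:ℝ)+1500)+1) with hB
  have hB0 : 0 ≤ B := by positivity
  have haB : B ≤ a := by
    have h4 : B^4 ≤ (n:ℝ) := by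
      have : (((17*(5*c+1500)+1)^4 : ℕ) : ℝ) ≤ (n:ℝ) := Nat.cast_le.2 hnB
      rw [show (((17*(5*c+1500)+1)^4 : ℕ) : ℝ) = B^4 by push_cast; ring] at this
      exact this
    rw [← ha4] at h4
    exact le_of_pow_le_pow_left₀ (by norm_num) ha0 h4
  clear hnB hN hc
  -- log bounds
  have hlogn : Real.log n ≤ 4*a := by
    have h1 : Real.log n = 4 * Real.log a := by
      rw [ha]
      rw [Real.log_sqrt (Real.sqrt_nonneg _), Real.log_sqrt hn0.le]
      ring
    have h2 : Real.log a ≤ a - 1 := by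
      have := Real.log_le_sub_one_of_pos (lt_of_lt_of_le one_pos ha1)
      linarith
    nlinarith
  have hlog2n : Real.log (2*(n:ℝ)) ≤ 5*a := by
    rw [Real.log_mul (by norm_num) hn0.ne']
    have h2 : Real.log 2 < 0.6931471808 := Real.log_two_lt_d9
    linarith
  have hlog2n0 : 0 ≤ Real.log (2*(n:ℝ)) := by
    apply Real.log_nonneg
    linarith [h60]
  have hlogn0 : 0 ≤ Real.log n := Real.log_natCast_nonneg n
  have hmain := main_ineq hn60
  have hcardle : ((primeSet n n).card : ℝ) ≤ (c:ℝ) := Nat.cast_le.2 hcard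
  have hcardpos : (0:ℝ) ≤ ((primeSet n n).card : ℝ) := Nat.cast_nonneg _
  -- bound RHS by (5c + 1500) * a^3
  have hRHS : ((primeSet n n).card : ℝ) * Real.log (2*(n:ℝ))
      + 2*Real.sqrt n * (Real.log n + 1) + (Real.log n + 1)*(5*Real.log n + 9)
      + 5*Real.log n + AA + 270 ≤ (5*(c:ℝ)+1500) * a^3 := by
    have t1 : ((primeSet n n).card : ℝ) * Real.log (2*(n:ℝ)) ≤ (c:ℝ) * (5*a) := by
      calc ((primeSet n n).card : ℝ) * Real.log (2*(n:ℝ)) ≤ (c:ℝ) * Real.log (2*(n:ℝ)) :=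
          mul_le_mul_of_nonneg_right hcardle hlog2n0
        _ ≤ (c:ℝ) * (5*a) := mul_le_mul_of_nonneg_left hlog2n (Nat.cast_nonneg _)
    have hsqa : Real.sqrt n = a^2 := by rw [← haa]; ring
    have t2 : 2*Real.sqrt n * (Real.log n + 1) ≤ 10 * a^3 := by
      rw [hsqa]
      nlinarith
    have t3 : (Real.log n + 1)*(5*Real.log n + 9) ≤ 145 * a^3 := by
      nlinarith [mul_le_mul hlogn hlogn hlogn0 (by linarith : (0:ℝ) ≤ 4*a)]
    have t4 : 5*Real.log n ≤ 20*a^3 := by nlinarith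
    have t5 : AA + 270 ≤ 272 * a^3 := by nlinarith [AA_le]
    have haa3 : a ≤ a^3 := by nlinarith
    have hc5 : (c:ℝ) * (5*a) ≤ 5*(c:ℝ)*a^3 := by
      have := mul_le_mul_of_nonneg_left haa3 (show (0:ℝ) ≤ 5*(c:ℝ) by positivity)
      linarith
    nlinarith
  -- contradiction : (AA/5) * n > (5c+1500) * a^3
  have hfinal : (5*(c:ℝ)+1500) * a^3 < (AA/5) * (n:ℝ) := by
    rw [← ha4]
    have hAA := AA_gt
    have ha3 : (0:ℝ) < a^3 := by positivity
    have : (17*(5*(c:ℝ)+1500)+1) * a^3 ≤ a * a^3 := by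
      apply mul_le_mul_of_nonneg_right haB ha3.le
    nlinarith
  linarith
end
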